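/- Let Φ = {φ_i(x) = ρ x + a_i}_{i∈Γ} be an equicontractive homothetic self-similar IFS on ℝ^d satisfying the weak separation condition, with maximal neighbourhood system 𝒩₀ = 𝒩(𝚊₀). Then there exist a finite word 𝚋₀ ∈ Γ* with 𝒩(𝚋₀) = 𝒩₀ and a subcollection 𝓕 ⊆ 𝒩₀ such that: (i) for every h ∈ 𝓕 there exists 𝚋_h ∈ Γ* with h ∘ φ_{𝚋_h} = φ_{𝚋₀} and 𝒩(𝚋_h) = 𝒩₀; and (ii) for every h ∈ 𝒩₀ \ 𝓕, B_{𝚋₀} ∩ h(K) = ∅. -/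

import Mathlib

/-!
By maximality of `#𝒩(𝚊₀)`, every word ending in `𝚊₀` has neighbourhood system `𝒩₀`.
Start from such a word `R` and let `x ∈ K` be the fixed point of `φ_R`. Call `h ∈ 𝒩₀` a left
factor of `R` if `h ∘ φ_y = φ_R` for some word `y` ending in `𝚊₀`. If some `h ∈ 𝒩₀` with
`x ∈ h(K)` is not a left factor, then `x` lies in `φ_R(h(K)) = K_𝚋` with `|𝚋| = |R|`, hence in
a cylinder `K_𝚞` with `|𝚞| = 3|R|`, so `φ_{RRR}⁻¹ ∘ φ_𝚞 ∈ 𝒩(RRR) = 𝒩(R)`; this makes `h` a left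
factor of a longer word `Rz`, while every left factor of `R` stays one. As `𝒩₀` is finite, we
reach a word `R` for which every `h ∈ 𝒩₀` that is not a left factor has `x ∉ h(K)`, i.e. `h(K)`
keeps a positive distance from `x`. Replacing `R` by `RR` preserves all of this and keeps `x`
fixed, and a long enough such word shrinks `B_R` into a small ball around `x`.
-/

open Metric

/-- Composition `φ_𝚊` along a finite word. -/
def wordMap {Γ α : Type*} (φ : Γ → α → α) : List Γ → α → α
  | [] => id
  | i :: a => φ i ∘ wordMap φ a

/-- Equicontractive neighbourhood system. -/
def nbhdE {Γ : Type*} {d : ℕ}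
    (φ : Γ → EuclideanSpace ℝ (Fin d) → EuclideanSpace ℝ (Fin d))
    (K : Set (EuclideanSpace ℝ (Fin d))) (a : List Γ) :
    Set (EuclideanSpace ℝ (Fin d) → EuclideanSpace ℝ (Fin d)) :=
  {f | ∃ b : List Γ, b.length = a.length ∧
    (wordMap φ b '' K ∩ wordMap φ a '' closedBall 0 1).Nonempty ∧
    wordMap φ a ∘ f = wordMap φ b}

open Function Set

section Words

variable {Γ α : Type*} {φ : Γ → α → α} {K : Set α}

theorem wordMap_append (φ : Γ → α → α) (u v : List Γ) :
    wordMap φ (u ++ v) = wordMap φ u ∘ wordMap φ v := by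
  induction u with
  | nil => rfl
  | cons i u ih => simp only [List.cons_append, wordMap, ih, comp_assoc]

theorem mapsTo_wordMap (hK : ⋃ i, φ i '' K ⊆ K) (w : List Γ) : MapsTo (wordMap φ w) K K := by
  induction w with
  | nil => exact mapsTo_id K
  | cons i w ih =>
    have hi : MapsTo (φ i) K K := fun x hx => hK (mem_iUnion_of_mem i (mem_image_of_mem _ hx))
    exact hi.comp ih

theorem exists_length_eq_mem_wordMap_image (hK : K ⊆ ⋃ i, φ i '' K) {x : α} (hx : x ∈ K)
    (n : ℕ) : ∃ w : List Γ, w.length = n ∧ x ∈ wordMap φ w '' K := by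
  induction n generalizing x with
  | zero => exact ⟨[], rfl, x, hx, rfl⟩
  | succ n ih =>
    obtain ⟨i, y, hy, rfl⟩ := mem_iUnion.1 (hK hx)
    obtain ⟨w, hw, hyw⟩ := ih hy
    exact ⟨i :: w, by simp [hw], by simpa [wordMap, image_comp] using mem_image_of_mem _ hyw⟩

def leftFactors (φ : Γ → α → α) (a₀ R : List Γ) : Set (α → α) :=
  {h | ∃ y, a₀ <:+ y ∧ h ∘ wordMap φ y = wordMap φ R}

theorem leftFactors_subset_append {a₀ R z : List Γ} (hz : a₀ <:+ z) :
    leftFactors φ a₀ R ⊆ leftFactors φ a₀ (R ++ z) := by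
  rintro h ⟨y, hy, hyR⟩
  exact ⟨y ++ z, hz.trans (List.suffix_append y z),
    by rw [wordMap_append, wordMap_append, ← hyR, comp_assoc]⟩

end Words

section Homothety

variable {Γ V : Type*} [NormedAddCommGroup V] [NormedSpace ℝ V] {ρ : ℝ} {a : Γ → V}
  {φ : Γ → V → V}

theorem exists_wordMap_eq_smul_add (hφ : ∀ i x, φ i x = ρ • x + a i) (w : List Γ) :
    ∃ c : V, ∀ x, wordMap φ w x = ρ ^ w.length • x + c := by
  induction w with
  | nil => exact ⟨0, fun x => by simp [wordMap]⟩
  | cons i w ih =>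
    obtain ⟨c, hc⟩ := ih
    refine ⟨ρ • c + a i, fun x => ?_⟩
    simp only [wordMap, comp_apply, hφ, hc, List.length_cons, pow_succ', smul_add, smul_smul,
      add_assoc]

theorem dist_wordMap (hφ : ∀ i x, φ i x = ρ • x + a i) (w : List Γ) (x y : V) :
    dist (wordMap φ w x) (wordMap φ w y) = |ρ| ^ w.length * dist x y := by
  obtain ⟨c, hc⟩ := exists_wordMap_eq_smul_add hφ w
  rw [hc, hc, dist_add_right, dist_smul₀, Real.norm_eq_abs, abs_pow]

theorem wordMap_bijective (hρ : ρ ≠ 0) (hφ : ∀ i x, φ i x = ρ • x + a i) (w : List Γ) :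
    Bijective (wordMap φ w) := by
  obtain ⟨c, hc⟩ := exists_wordMap_eq_smul_add hφ w
  have hρw : ρ ^ w.length ≠ 0 := pow_ne_zero _ hρ
  refine ⟨fun x y hxy => ?_, fun y => ⟨(ρ ^ w.length)⁻¹ • (y - c), ?_⟩⟩
  · rwa [hc, hc, add_left_inj, smul_right_inj hρw] at hxy
  · rw [hc, smul_inv_smul₀ hρw, sub_add_cancel]

theorem lipschitzWith_wordMap (hφ : ∀ i x, φ i x = ρ • x + a i) (w : List Γ) :
    LipschitzWith (‖ρ‖₊ ^ w.length) (wordMap φ w) :=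
  LipschitzWith.of_dist_le_mul fun x y => by simp [dist_wordMap hφ]

theorem exists_isFixedPt_wordMap_mem (hρ : |ρ| < 1) (hφ : ∀ i x, φ i x = ρ • x + a i)
    [CompleteSpace V] {K : Set V} (hKc : IsClosed K) (hKne : K.Nonempty) {w : List Γ}
    (hKw : MapsTo (wordMap φ w) K K) (hw : w ≠ []) :
    ∃ x ∈ K, IsFixedPt (wordMap φ w) x := by
  have hf : ContractingWith (‖ρ‖₊ ^ w.length) (wordMap φ w) :=
    ⟨pow_lt_one₀ (by positivity) (by simpa [← NNReal.coe_lt_one] using hρ) (by simpa using hw),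
      lipschitzWith_wordMap hφ w⟩
  obtain ⟨k, hk⟩ := hKne
  exact ⟨_, hKc.mem_of_tendsto (hf.tendsto_iterate_fixedPoint k)
    (Filter.Eventually.of_forall fun n => hKw.iterate n hk), hf.fixedPoint_isFixedPt⟩

end Homothety

section Neighbourhood

variable {Γ : Type*} {d : ℕ}

local notation "E" => EuclideanSpace ℝ (Fin d)

variable {ρ : ℝ} {a : Γ → EuclideanSpace ℝ (Fin d)}
  {φ : Γ → EuclideanSpace ℝ (Fin d) → EuclideanSpace ℝ (Fin d)}
  {K : Set (EuclideanSpace ℝ (Fin d))} {a₀ : List Γ}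

theorem nbhdE_subset_nbhdE_append (c : List Γ) : nbhdE φ K a₀ ⊆ nbhdE φ K (c ++ a₀) := by
  rintro f ⟨b, hlen, ⟨q, hqb, hqa⟩, hf⟩
  refine ⟨c ++ b, by simp [hlen], ⟨wordMap φ c q, ?_, ?_⟩, ?_⟩
  · rw [wordMap_append, image_comp]
    exact mem_image_of_mem _ hqb
  · rw [wordMap_append, image_comp]
    exact mem_image_of_mem _ hqa
  · rw [wordMap_append, wordMap_append, comp_assoc, hf]

theorem nbhdE_eq_of_isSuffix (hfin : ∀ w : List Γ, (nbhdE φ K w).Finite)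
    (hmax : ∀ w : List Γ, (nbhdE φ K w).ncard ≤ (nbhdE φ K a₀).ncard) {w : List Γ}
    (hw : a₀ <:+ w) : nbhdE φ K w = nbhdE φ K a₀ := by
  obtain ⟨c, rfl⟩ := hw
  exact (eq_of_subset_of_ncard_le (nbhdE_subset_nbhdE_append c) (hmax _) (hfin _)).symm

theorem isometry_of_mem_nbhdE (hρ : ρ ≠ 0) (hφ : ∀ i x, φ i x = ρ • x + a i) {w : List Γ}
    {h : E → E} (hh : h ∈ nbhdE φ K w) : Isometry h := by
  obtain ⟨b, hlen, -, hb⟩ := hh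
  refine Isometry.of_dist_eq fun x y =>
    mul_left_cancel₀ (pow_ne_zero w.length (abs_ne_zero.2 hρ)) ?_
  calc |ρ| ^ w.length * dist (h x) (h y) = dist (wordMap φ w (h x)) (wordMap φ w (h y)) :=
        (dist_wordMap hφ w _ _).symm
    _ = dist (wordMap φ b x) (wordMap φ b y) := by rw [← hb, comp_apply, comp_apply]
    _ = |ρ| ^ w.length * dist x y := by rw [dist_wordMap hφ, hlen]

theorem exists_mem_leftFactors_append (hρ : ρ ≠ 0) (hφ : ∀ i x, φ i x = ρ • x + a i)
    (hK : K ⊆ ⋃ i, φ i '' K) (hfin : ∀ w : List Γ, (nbhdE φ K w).Finite)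
    (hmax : ∀ w : List Γ, (nbhdE φ K w).ncard ≤ (nbhdE φ K a₀).ncard)
    {R : List Γ} (hR : a₀ <:+ R) {x : E} (hx : x ∈ closedBall 0 1)
    (hRx : IsFixedPt (wordMap φ R) x) {h : E → E} (hh : h ∈ nbhdE φ K a₀) (hxh : x ∈ h '' K) :
    ∃ z, a₀ <:+ z ∧ h ∈ leftFactors φ a₀ (R ++ z) := by
  have hRRR : a₀ <:+ R ++ R ++ R := hR.trans (List.suffix_append _ R)
  rw [← nbhdE_eq_of_isSuffix hfin hmax hR] at hh
  obtain ⟨B, hBlen, -, hB⟩ := hh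
  obtain ⟨ξ, hξK, hξx⟩ : x ∈ wordMap φ B '' K := by
    rw [← hB, image_comp, ← hRx.eq]
    exact mem_image_of_mem _ hxh
  obtain ⟨w, hwlen, hξw⟩ := exists_length_eq_mem_wordMap_image hK hξK (2 * R.length)
  obtain ⟨γ, hγ⟩ : ∃ γ, wordMap φ (R ++ R ++ R) ∘ γ = wordMap φ (B ++ w) :=
    (wordMap_bijective hρ hφ _).surjective.comp_left _
  -- `γ` is a neighbour at level `3|R|`; maximality realises it at level `|R|`, and cancelling
  -- one `φ_R` then exhibits `h ∘ φ_w` as a word map beginning with `R`.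
  have hγ3 : γ ∈ nbhdE φ K (R ++ R ++ R) := by
    refine ⟨B ++ w, by simp only [List.length_append, hBlen, hwlen]; ring, ⟨x, ?_, x, hx, ?_⟩, hγ⟩
    · rw [wordMap_append, image_comp, ← hξx]
      exact mem_image_of_mem _ hξw
    · rw [wordMap_append, wordMap_append]
      exact (hRx.comp hRx).comp hRx
  rw [nbhdE_eq_of_isSuffix hfin hmax hRRR, ← nbhdE_eq_of_isSuffix hfin hmax hR] at hγ3
  obtain ⟨C, -, -, hC⟩ := hγ3
  have hcancel : wordMap φ R ∘ wordMap φ C = h ∘ wordMap φ w := by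
    apply (wordMap_bijective hρ hφ R).injective.comp_left
    calc wordMap φ R ∘ (wordMap φ R ∘ wordMap φ C) = wordMap φ (R ++ R ++ R) ∘ γ := by
          rw [← hC, wordMap_append, wordMap_append]; rfl
      _ = wordMap φ B ∘ wordMap φ w := by rw [hγ, wordMap_append]
      _ = wordMap φ R ∘ (h ∘ wordMap φ w) := by rw [← hB]; rfl
  refine ⟨C ++ a₀, List.suffix_append _ _, w ++ a₀, List.suffix_append _ _, ?_⟩
  rw [wordMap_append, wordMap_append, wordMap_append, ← comp_assoc, ← hcancel, comp_assoc]

structure IsSeparatingWord (φ : Γ → E → E) (K : Set E) (a₀ R : List Γ) (x : E) : Prop where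
  isSuffix : a₀ <:+ R
  ne_nil : R ≠ []
  isFixedPt : IsFixedPt (wordMap φ R) x
  notMem_image : ∀ h ∈ nbhdE φ K a₀ \ leftFactors φ a₀ R, x ∉ h '' K

theorem exists_isSeparatingWord (hρ₀ : ρ ≠ 0) (hρ₁ : |ρ| < 1)
    (hφ : ∀ i x, φ i x = ρ • x + a i) (hKc : IsClosed K) (hKne : K.Nonempty)
    (hattr : K = ⋃ i, φ i '' K) (hKball : K ⊆ closedBall 0 1)
    (hfin : ∀ w : List Γ, (nbhdE φ K w).Finite)
    (hmax : ∀ w : List Γ, (nbhdE φ K w).ncard ≤ (nbhdE φ K a₀).ncard)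
    {R : List Γ} (hR : a₀ <:+ R) (hR₀ : R ≠ []) :
    ∃ S x, x ∈ K ∧ IsSeparatingWord φ K a₀ S x := by
  obtain ⟨n, hn⟩ : ∃ n, (nbhdE φ K a₀ \ leftFactors φ a₀ R).ncard = n := ⟨_, rfl⟩
  induction n using Nat.strong_induction_on generalizing R with
  | _ n ih =>
    obtain ⟨x, hxK, hRx⟩ :=
      exists_isFixedPt_wordMap_mem hρ₁ hφ hKc hKne (mapsTo_wordMap hattr.symm.subset R) hR₀
    by_cases hsep : ∀ h ∈ nbhdE φ K a₀ \ leftFactors φ a₀ R, x ∉ h '' K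
    · exact ⟨R, x, hxK, hR, hR₀, hRx, hsep⟩
    push Not at hsep
    obtain ⟨h, ⟨hh, hhR⟩, hxh⟩ := hsep
    obtain ⟨z, hz, hhz⟩ := exists_mem_leftFactors_append hρ₀ hφ hattr.subset hfin hmax hR
      (hKball hxK) hRx hh hxh
    refine ih _ ?_ (hz.trans (List.suffix_append R z)) (List.append_ne_nil_of_left_ne_nil hR₀ z) rfl
    rw [← hn]
    exact ncard_lt_ncard ⟨sdiff_subset_sdiff_right (leftFactors_subset_append hz),
      fun hsub => (hsub ⟨hh, hhR⟩).2 hhz⟩ (hfin a₀).sdiff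

namespace IsSeparatingWord

variable {R : List Γ} {x : EuclideanSpace ℝ (Fin d)}

theorem append_self (hR : IsSeparatingWord φ K a₀ R x) : IsSeparatingWord φ K a₀ (R ++ R) x where
  isSuffix := hR.isSuffix.trans (List.suffix_append R R)
  ne_nil := List.append_ne_nil_of_left_ne_nil hR.ne_nil R
  isFixedPt := by
    rw [wordMap_append]
    exact hR.isFixedPt.comp hR.isFixedPt
  notMem_image h hh :=
    hR.notMem_image h ⟨hh.1, fun hhR => hh.2 (leftFactors_subset_append hR.isSuffix hhR)⟩

theorem exists_le_length (hR : IsSeparatingWord φ K a₀ R x) (n : ℕ) :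
    ∃ S, n ≤ S.length ∧ IsSeparatingWord φ K a₀ S x := by
  induction n with
  | zero => exact ⟨R, Nat.zero_le _, hR⟩
  | succ n ih =>
    obtain ⟨S, hnS, hS⟩ := ih
    have := List.length_pos_of_ne_nil hS.ne_nil
    exact ⟨S ++ S, by rw [List.length_append]; omega, hS.append_self⟩

theorem exists_image_closedBall_subset_ball (hR : IsSeparatingWord φ K a₀ R x)
    (hρ : |ρ| < 1) (hφ : ∀ i x, φ i x = ρ • x + a i) (hx : x ∈ closedBall 0 1) {ε : ℝ}
    (hε : 0 < ε) : ∃ S, IsSeparatingWord φ K a₀ S x ∧ wordMap φ S '' closedBall 0 1 ⊆ ball x ε := by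
  obtain ⟨n, hn⟩ := exists_pow_lt_of_lt_one (half_pos hε) hρ
  obtain ⟨S, hnS, hS⟩ := hR.exists_le_length n
  refine ⟨S, hS, ?_⟩
  rintro _ ⟨p, hp, rfl⟩
  rw [mem_closedBall, dist_zero_right] at hp hx
  have hpx : dist p x ≤ 2 := by rw [dist_eq_norm]; linarith [norm_sub_le p x]
  rw [mem_ball]
  calc dist (wordMap φ S p) x = dist (wordMap φ S p) (wordMap φ S x) := by rw [hS.isFixedPt.eq]
    _ = |ρ| ^ S.length * dist p x := dist_wordMap hφ S p x
    _ ≤ |ρ| ^ n * 2 :=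
        mul_le_mul (pow_le_pow_of_le_one (abs_nonneg ρ) hρ.le hnS) hpx dist_nonneg (by positivity)
    _ < ε := by linarith

end IsSeparatingWord

end Neighbourhood

theorem stmt10_general {Γ : Type*} [Nonempty Γ] {d : ℕ}
    (ρ : ℝ) (hρ : ρ ∈ Set.Ioo (0 : ℝ) 1) (a : Γ → EuclideanSpace ℝ (Fin d))
    (φ : Γ → EuclideanSpace ℝ (Fin d) → EuclideanSpace ℝ (Fin d))
    (hφ : ∀ i x, φ i x = ρ • x + a i)
    (K : Set (EuclideanSpace ℝ (Fin d))) (hKc : IsCompact K) (hKne : K.Nonempty)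
    (hattr : K = ⋃ i, φ i '' K) (hKball : K ⊆ ball 0 1)
    (hfin : ∀ w : List Γ, (nbhdE φ K w).Finite)
    (a₀ : List Γ) (hmax : ∀ w : List Γ, (nbhdE φ K w).ncard ≤ (nbhdE φ K a₀).ncard) :
    ∃ (b₀ : List Γ) (F : Set (EuclideanSpace ℝ (Fin d) → EuclideanSpace ℝ (Fin d))),
      F ⊆ nbhdE φ K a₀ ∧ nbhdE φ K b₀ = nbhdE φ K a₀ ∧
      (∀ h ∈ F, ∃ bh : List Γ,
        h ∘ wordMap φ bh = wordMap φ b₀ ∧ nbhdE φ K bh = nbhdE φ K a₀) ∧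
      (∀ h ∈ nbhdE φ K a₀ \ F,
        wordMap φ b₀ '' closedBall 0 1 ∩ h '' K = ∅) := by
  obtain ⟨i₀⟩ := ‹Nonempty Γ›
  have hρ₀ : ρ ≠ 0 := hρ.1.ne'
  have hρ₁ : |ρ| < 1 := by rw [abs_of_pos hρ.1]; exact hρ.2
  have hKB : K ⊆ closedBall 0 1 := hKball.trans ball_subset_closedBall
  obtain ⟨R, x, hxK, hR⟩ := exists_isSeparatingWord hρ₀ hρ₁ hφ hKc.isClosed hKne hattr hKB hfin
    hmax (List.suffix_cons i₀ a₀) (List.cons_ne_nil i₀ a₀)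
  set T := {h ∈ nbhdE φ K a₀ | x ∉ h '' K}
  have hT : IsCompact (⋃ h ∈ T, h '' K) := ((hfin a₀).subset (sep_subset _ _)).isCompact_biUnion
    fun h hh => hKc.image (isometry_of_mem_nbhdE hρ₀ hφ hh.1).continuous
  have hxT : x ∉ ⋃ h ∈ T, h '' K := fun hx => by
    obtain ⟨h, hh, hxh⟩ := mem_iUnion₂.1 hx
    exact hh.2 hxh
  obtain ⟨ε, hε, hεT⟩ := Metric.mem_nhds_iff.1 (hT.isClosed.compl_mem_nhds hxT)
  obtain ⟨S, hS, hSε⟩ := hR.exists_image_closedBall_subset_ball hρ₁ hφ (hKB hxK) hε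
  refine ⟨S, nbhdE φ K a₀ ∩ leftFactors φ a₀ S, inter_subset_left,
    nbhdE_eq_of_isSuffix hfin hmax hS.isSuffix, ?_, ?_⟩
  · rintro h ⟨-, y, hy, hyS⟩
    exact ⟨y, hyS, nbhdE_eq_of_isSuffix hfin hmax hy⟩
  · rintro h ⟨hh, hhS⟩
    have hhT : h ∈ T := ⟨hh, hS.notMem_image h ⟨hh, fun hF => hhS ⟨hh, hF⟩⟩⟩
    exact eq_empty_of_forall_notMem fun q hq => hεT (hSε hq.1) (mem_biUnion hhT hq.2)

/-- **Structure of the maximal neighbourhood system.** For an equicontractive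
homothetic IFS with the weak separation condition, there exist a word `𝚋₀` with
`𝒩(𝚋₀) = 𝒩₀` and a family `𝓕 ⊆ 𝒩₀` such that: (i) for each `h ∈ 𝓕` there is a
word `𝚋_h` with `h ∘ φ_{𝚋_h} = φ_{𝚋₀}` and `𝒩(𝚋_h) = 𝒩₀`; (ii) for each
`h ∈ 𝒩₀ \ 𝓕`, `B_{𝚋₀} ∩ h(K) = ∅`. -/
theorem stmt10 {Γ : Type*} [Fintype Γ] [Nonempty Γ] {d : ℕ}
    (ρ : ℝ) (hρ : ρ ∈ Set.Ioo (0 : ℝ) 1) (a : Γ → EuclideanSpace ℝ (Fin d))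
    (φ : Γ → EuclideanSpace ℝ (Fin d) → EuclideanSpace ℝ (Fin d))
    (hφ : ∀ i x, φ i x = ρ • x + a i)
    (K : Set (EuclideanSpace ℝ (Fin d))) (hKc : IsCompact K) (hKne : K.Nonempty)
    (hattr : K = ⋃ i, φ i '' K) (hKball : K ⊆ ball 0 1)
    (hfin : ∀ w : List Γ, (nbhdE φ K w).Finite)
    (a₀ : List Γ) (hmax : ∀ w : List Γ, (nbhdE φ K w).ncard ≤ (nbhdE φ K a₀).ncard) :
    ∃ (b₀ : List Γ) (F : Set (EuclideanSpace ℝ (Fin d) → EuclideanSpace ℝ (Fin d))),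
      F ⊆ nbhdE φ K a₀ ∧ nbhdE φ K b₀ = nbhdE φ K a₀ ∧
      (∀ h ∈ F, ∃ bh : List Γ,
        h ∘ wordMap φ bh = wordMap φ b₀ ∧ nbhdE φ K bh = nbhdE φ K a₀) ∧
      (∀ h ∈ nbhdE φ K a₀ \ F,
        wordMap φ b₀ '' closedBall 0 1 ∩ h '' K = ∅) :=
  stmt10_general ρ hρ a φ hφ K hKc hKne hattr hKball hfin a₀ hmax
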